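/- Let λ ∈ [0,1) and C ≥ 0. For any nonnegative sequence (d_j), the bound max_{j ∈ [0,t−1]} C·λ^{t−j−1}·d_j ≤ ∑_{j=0}^{t−1} C·λ^{t−j−1}·d_j holds, and conversely ∑_{j=0}^{t−1} C·λ^{t−j−1}·d_j ≤ C/(1−√λ) · max_{j ∈ [0,t−1]} (√λ)^{t−j−1}·d_j. -/
import Mathlib


theorem stmt_12 (lam C : ℝ) (hlam0 : 0 ≤ lam) (hlam1 : lam < 1) (hC : 0 ≤ C)
    (d : ℕ → ℝ) (hd : ∀ j, 0 ≤ d j) (t : ℕ) (ht : 0 < t) :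
    (∀ j ∈ Finset.range t,
      C * lam ^ (t - j - 1) * d j ≤ ∑ k ∈ Finset.range t, C * lam ^ (t - k - 1) * d k) ∧
    (∑ j ∈ Finset.range t, C * lam ^ (t - j - 1) * d j ≤
      C / (1 - Real.sqrt lam) *
        (Finset.range t).sup' (Finset.nonempty_range_iff.mpr ht.ne')
          (fun j => Real.sqrt lam ^ (t - j - 1) * d j)) := by
  have hs0 : 0 ≤ Real.sqrt lam := Real.sqrt_nonneg _
  have hs1 : Real.sqrt lam < 1 := by
    have : Real.sqrt lam < Real.sqrt 1 := Real.sqrt_lt_sqrt hlam0 hlam1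
    simpa using this
  set s := Real.sqrt lam with hsdef
  have hlam : lam = s * s := (Real.mul_self_sqrt hlam0).symm
  have h1s : 0 < 1 - s := by linarith
  constructor
  · intro j hj
    exact Finset.single_le_sum (f := fun k => C * lam ^ (t - k - 1) * d k)
      (fun i _ => by have := hd i; positivity) hj
  · set M := (Finset.range t).sup' (Finset.nonempty_range_iff.mpr ht.ne')
      (fun j => s ^ (t - j - 1) * d j) with hMdef
    have hM : ∀ j ∈ Finset.range t, s ^ (t - j - 1) * d j ≤ M :=
      fun j hj => Finset.le_sup' (fun j => s ^ (t - j - 1) * d j) hj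
    have hMnn : 0 ≤ M := by
      refine le_trans ?_ (hM 0 (Finset.mem_range.mpr ht))
      have := hd 0; positivity
    have step1 : ∑ j ∈ Finset.range t, C * lam ^ (t - j - 1) * d j
        ≤ ∑ j ∈ Finset.range t, C * s ^ (t - j - 1) * M := by
      refine Finset.sum_le_sum fun j hj => ?_
      have : C * lam ^ (t - j - 1) * d j
          = C * s ^ (t - j - 1) * (s ^ (t - j - 1) * d j) := by
        rw [hlam, mul_pow]; ring
      rw [this]
      exact mul_le_mul_of_nonneg_left (hM j hj) (by positivity)
    have step2 : ∑ j ∈ Finset.range t, C * s ^ (t - j - 1) * M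
        = C * M * ∑ k ∈ Finset.range t, s ^ k := by
      rw [Finset.mul_sum]
      rw [← Finset.sum_range_reflect (fun k => C * M * s ^ k) t]
      refine Finset.sum_congr rfl fun j hj => ?_
      have : t - 1 - j = t - j - 1 := by omega
      rw [this]; ring
    have step3 : ∑ k ∈ Finset.range t, s ^ k ≤ 1 / (1 - s) := by
      rw [le_div_iff₀ h1s]
      have hgm := geom_sum_mul s t
      have hsn : 0 ≤ s ^ t := by positivity
      nlinarith
    calc ∑ j ∈ Finset.range t, C * lam ^ (t - j - 1) * d j
        ≤ C * M * ∑ k ∈ Finset.range t, s ^ k := by rw [← step2]; exact step1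
      _ ≤ C * M * (1 / (1 - s)) :=
          mul_le_mul_of_nonneg_left step3 (by positivity)
      _ = C / (1 - s) * M := by field_simp
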